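/- For all s ≥ 2, all j' ≥ 1, all n ≥ 1, and all m with 1 ≤ m ≤ 2^{j'}: λ_s(n,m) ≤ 2^{s−1}·n + (j')^{s−2}·(m−1). -/

import Mathlib

/-!
Split a sequence with `m ≤ 2^(j+1)` blocks into a left part `L` made of `2^j` blocks and a right
part `R` made of the others. The symbols occurring in only one part give two order-`s` sequences
over disjoint alphabets, each with at most `2^j` blocks. The symbols occurring in both parts give,
on each side, a sequence of order `s - 1`: an alternation `a b a b ⋯` in `L` can be extended by one
more letter from `R`, and one in `R` by one more letter from `L`. Induction on `s` and `j` then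
yields the bound, since `j^(s-2) + j^(s-3) ≤ (j+1)^(s-2)`. For `s = 2`, deleting at most `m - 1`
repeated letters at the block boundaries leaves a 2-sparse order-2 sequence, whose length is at
most `2n - 1`.
-/

/-- Alternating list `a b a b ⋯` of the given length. -/
def altList : ℕ → ℕ → ℕ → List ℕ
  | 0, _, _ => []
  | (k+1), a, b => a :: altList k b a

/-- An order-`s` Davenport–Schinzel sequence: it contains no (not necessarily
contiguous) subsequence `a b a b ⋯` of length `s+2` over two distinct symbols. -/
def IsDS (s : ℕ) (S : List ℕ) : Prop :=
  ∀ a b : ℕ, a ≠ b → ¬ (altList (s + 2) a b).Sublist S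

/-- 2-sparse: no two equal adjacent symbols. -/
def Sparse2 (S : List ℕ) : Prop := S.Chain' (· ≠ ·)

/-- `S` can be partitioned into at most `m` blocks
(contiguous runs of pairwise distinct symbols). -/
def Blocked (m : ℕ) (S : List ℕ) : Prop :=
  ∃ Bs : List (List ℕ), Bs.length ≤ m ∧ (∀ B ∈ Bs, B.Nodup) ∧ S = Bs.flatten

/-- `λ_s(n)`: maximum length of a 2-sparse order-`s` DS sequence over an
alphabet of `n` symbols. -/
noncomputable def lamS (s n : ℕ) : ℕ :=
  sSup {l : ℕ | ∃ S : List ℕ, IsDS s S ∧ Sparse2 S ∧ S.toFinset.card ≤ n ∧ S.length = l}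

/-- `λ_s(n,m)`: maximum length of an order-`s` DS sequence over an alphabet of
`n` symbols that can be partitioned into at most `m` blocks. -/
noncomputable def lamB (s n m : ℕ) : ℕ :=
  sSup {l : ℕ | ∃ S : List ℕ, IsDS s S ∧ S.toFinset.card ≤ n ∧ Blocked m S ∧ S.length = l}

open List

theorem List.exists_eq_append_cons_notMem {α : Type*} {a : α} {l : List α} (h : a ∈ l) :
    ∃ I t, l = I ++ a :: t ∧ a ∉ I := by
  induction l with
  | nil => simp at h
  | cons c l ih =>
    by_cases hc : c = a
    · exact ⟨[], l, by simp [hc], by simp⟩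
    · obtain ⟨I, t, rfl, haI⟩ := ih (by simpa [Ne.symm hc] using h)
      exact ⟨c :: I, t, rfl, by simp [haI, Ne.symm hc]⟩

theorem altList_succ_eq_append (k a b : ℕ) :
    ∃ c, (c = a ∨ c = b) ∧ altList (k + 1) a b = altList k a b ++ [c] := by
  induction k generalizing a b with
  | zero => exact ⟨a, .inl rfl, rfl⟩
  | succ k ih =>
    obtain ⟨c, hc, h⟩ := ih b a
    exact ⟨c, hc.symm, by rw [altList, h]; rfl⟩

theorem IsDS.sublist {s : ℕ} {S T : List ℕ} (h : IsDS s S) (hT : T <+ S) : IsDS s T :=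
  fun a b hab hsub => h a b hab (hsub.trans hT)

theorem IsDS.filter_mem_left {s : ℕ} {L R : List ℕ} (h : IsDS (s + 1) (L ++ R)) :
    IsDS s (L.filter (· ∈ R)) := by
  intro a b hab hsub
  have hR : ∀ x ∈ altList (s + 2) a b, x ∈ R := fun x hx => by
    simpa using (mem_filter.1 (hsub.subset hx)).2
  obtain ⟨c, hc, hext⟩ := altList_succ_eq_append (s + 2) a b
  have hcR : c ∈ R := by rcases hc with rfl | rfl <;> exact hR _ (by simp [altList])
  exact h a b hab (hext ▸ (hsub.trans filter_sublist).append (singleton_sublist.2 hcR))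

theorem IsDS.filter_mem_right {s : ℕ} {L R : List ℕ} (h : IsDS (s + 1) (L ++ R)) :
    IsDS s (R.filter (· ∈ L)) := by
  intro a b hab hsub
  have hbL : b ∈ L := by simpa using (mem_filter.1 (hsub.subset (by simp [altList]))).2
  exact h b a hab.symm ((singleton_sublist.2 hbL).append (hsub.trans filter_sublist))

theorem Blocked.filter {m : ℕ} {S : List ℕ} (h : Blocked m S) (p : ℕ → Bool) :
    Blocked m (S.filter p) := by
  obtain ⟨Bs, hlen, hnd, rfl⟩ := h
  refine ⟨Bs.map (·.filter p), by simpa using hlen, ?_, filter_flatten⟩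
  simp only [mem_map, forall_exists_index, and_imp, forall_apply_eq_imp_iff₂]
  exact fun B hB => (hnd B hB).filter p

theorem Blocked.exists_eq_append {m : ℕ} {S : List ℕ} (h : Blocked m S) (k : ℕ) :
    ∃ L R, S = L ++ R ∧ Blocked k L ∧ Blocked (m - k) R := by
  obtain ⟨Bs, hlen, hnd, rfl⟩ := h
  refine ⟨(Bs.take k).flatten, (Bs.drop k).flatten, by rw [← flatten_append, take_append_drop],
    ⟨_, by simp, fun B hB => hnd B (mem_of_mem_take hB), rfl⟩,
    ⟨_, by simp only [length_drop]; omega, fun B hB => hnd B (mem_of_mem_drop hB), rfl⟩⟩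

theorem Blocked.nodup {m : ℕ} {S : List ℕ} (h : Blocked m S) (hm : m ≤ 1) : S.Nodup := by
  obtain ⟨Bs, hlen, hnd, rfl⟩ := h
  rcases Bs with _ | ⟨B, _ | ⟨B', Bs⟩⟩
  · simp
  · simpa using hnd B (by simp)
  · simp at hlen; omega

-- a symbol of `I` recurring in `t` would give `a b a b`
theorem disjoint_toFinset_of_isDS_two {a : ℕ} {I t : List ℕ} (hds : IsDS 2 (a :: (I ++ a :: t)))
    (haI : a ∉ I) : Disjoint I.toFinset (a :: t).toFinset := by
  refine Finset.disjoint_left.2 fun b hbI hbt => ?_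
  rw [mem_toFinset] at hbI hbt
  rcases mem_cons.1 hbt with rfl | hbt
  · exact haI hbI
  · exact hds a b (by rintro rfl; exact haI hbI) <| .cons_cons a <|
      (singleton_sublist.2 hbI).append ((singleton_sublist.2 hbt).cons_cons a)

theorem length_le_of_sparse2_of_isDS_two {S : List ℕ} (hsp : Sparse2 S) (hds : IsDS 2 S) :
    S.length ≤ 2 * S.toFinset.card - 1 := by
  induction hn : S.length using Nat.strong_induction_on generalizing S with
  | _ n ih =>
    subst hn
    rcases S with _ | ⟨a, rest⟩
    · simp
    by_cases ha : a ∈ rest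
    · obtain ⟨I, t, rfl, haI⟩ := exists_eq_append_cons_notMem ha
      have hI : I ≠ [] := by rintro rfl; exact (isChain_cons_cons.1 hsp).1 rfl
      have hdisj := disjoint_toFinset_of_isDS_two hds haI
      have ihI := ih _ (by simp) (hsp.infix ⟨[a], a :: t, by simp⟩)
        (hds.sublist ((sublist_append_left _ _).trans (sublist_cons_self _ _))) rfl
      have iht := ih _ (by simp) (hsp.suffix ⟨a :: I, by simp⟩)
        (hds.sublist ((sublist_append_right _ _).trans (sublist_cons_self _ _))) rfl
      have hcard : (a :: (I ++ a :: t)).toFinset.card =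
          I.toFinset.card + (a :: t).toFinset.card := by
        rw [← Finset.card_union_of_disjoint hdisj]
        congr 1
        ext x
        simp only [mem_toFinset, mem_cons, mem_append, Finset.mem_union]
        tauto
      have hIpos : 0 < I.toFinset.card := Finset.card_pos.2 (by simpa using hI)
      have htpos : 0 < (a :: t).toFinset.card := Finset.card_pos.2 (by simp)
      simp only [length_cons, length_append] at ihI iht ⊢
      omega
    · have ihrest := ih _ (by simp) (S := rest) hsp.tail
        (hds.sublist (sublist_cons_self a rest)) rfl
      rw [toFinset_cons, Finset.card_insert_of_notMem (by simpa using ha), length_cons]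
      omega

theorem exists_sparse2_sublist_flatten :
    ∀ Bs : List (List ℕ), (∀ B ∈ Bs, B.Nodup) →
      ∃ T, T <+ Bs.flatten ∧ Sparse2 T ∧ Bs.flatten.length ≤ T.length + (Bs.length - 1)
  | [], _ => ⟨[], by simp, isChain_nil, by simp⟩
  | B :: Bs, hnd => by
    obtain ⟨T, hT, hsp, hlen⟩ := exists_sparse2_sublist_flatten Bs fun C hC => hnd C (by simp [hC])
    have hB : B.IsChain (· ≠ ·) := (hnd B mem_cons_self).isChain
    by_cases hjoin : ∃ x ∈ B.getLast?, x ∈ T.head?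
    · obtain ⟨x, hBx, hTx⟩ := hjoin
      obtain ⟨T', rfl⟩ := head?_eq_some_iff.1 hTx
      have hBs : Bs ≠ [] := by rintro rfl; simp at hT
      refine ⟨B ++ T', ((sublist_cons_self x T').trans hT).append_left B,
        isChain_append.2 ⟨hB, hsp.tail, fun y hy z hz => ?_⟩, ?_⟩
      · obtain rfl := Option.mem_unique hy hBx
        exact (isChain_cons.1 hsp).1 z hz
      · have := length_pos_iff.2 hBs
        simp only [flatten_cons, length_append, length_cons] at hlen ⊢
        omega
    · refine ⟨B ++ T, hT.append_left B,
        isChain_append.2 ⟨hB, hsp, fun y hy z hz hyz => hjoin ⟨y, hy, hyz ▸ hz⟩⟩, ?_⟩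
      simp only [flatten_cons, length_append, length_cons] at hlen ⊢
      omega

def BlockedLengthBound (s j a b : ℕ) : Prop :=
  ∀ S m, IsDS s S → Blocked m S → m ≤ 2 ^ j → S.length ≤ a * S.toFinset.card + b * (m - 1)

theorem BlockedLengthBound.mono {s j a b a' b' : ℕ} (h : BlockedLengthBound s j a b)
    (ha : a ≤ a') (hb : b ≤ b') : BlockedLengthBound s j a' b' :=
  fun S m hds hbl hm => (h S m hds hbl hm).trans (by gcongr)

theorem blockedLengthBound_two (j : ℕ) : BlockedLengthBound 2 j 2 1 := by
  rintro S m hds ⟨Bs, hlen, hnd, rfl⟩ -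
  obtain ⟨T, hT, hsp, hTlen⟩ := exists_sparse2_sublist_flatten Bs hnd
  have hTcard := length_le_of_sparse2_of_isDS_two hsp (hds.sublist hT)
  have hcard : T.toFinset.card ≤ Bs.flatten.toFinset.card :=
    Finset.card_le_card fun x => by simpa using fun hx => hT.subset hx
  omega

theorem blockedLengthBound_zero (s : ℕ) : BlockedLengthBound s 0 1 0 := by
  intro S m _ hbl hm
  simp [toFinset_card_of_nodup (hbl.nodup (by simpa using hm))]

theorem card_toFinset_append_eq (L R : List ℕ) :
    (L ++ R).toFinset.card = (L.filter (· ∉ R)).toFinset.card +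
      (R.filter (· ∉ L)).toFinset.card + (L.filter (· ∈ R)).toFinset.card := by
  have hl : (L.filter (· ∉ R)).toFinset = L.toFinset \ R.toFinset := by ext; simp
  have hr : (R.filter (· ∉ L)).toFinset = R.toFinset \ L.toFinset := by ext; simp
  have hg : (L.filter (· ∈ R)).toFinset = R.toFinset ∩ L.toFinset := by ext; simp [and_comm]
  rw [toFinset_append, hl, hr, hg, add_assoc, Finset.card_sdiff_add_card_inter,
    Finset.card_sdiff_add_card]

theorem card_toFinset_filter_mem_comm (L R : List ℕ) :
    (R.filter (· ∈ L)).toFinset.card = (L.filter (· ∈ R)).toFinset.card := by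
  congr 1; ext; simp [and_comm]

theorem length_append_eq_filter (L R : List ℕ) :
    (L ++ R).length = (L.filter (· ∉ R)).length + (R.filter (· ∉ L)).length +
      (L.filter (· ∈ R)).length + (R.filter (· ∈ L)).length := by
  rw [length_append, L.length_eq_length_filter_add (· ∈ R), R.length_eq_length_filter_add (· ∈ L)]
  simp only [decide_not]
  omega

theorem BlockedLengthBound.succ {s j a b c d : ℕ} (h₁ : BlockedLengthBound (s + 1) j a b)
    (h₂ : BlockedLengthBound s j c d) (hca : 2 * c ≤ a) :
    BlockedLengthBound (s + 1) (j + 1) a (b + d) := by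
  intro S m hds hbl hm
  by_cases hmj : m ≤ 2 ^ j
  · exact (h₁ S m hds hbl hmj).trans (by gcongr; omega)
  obtain ⟨L, R, rfl, hL, hR⟩ := hbl.exists_eq_append (2 ^ j)
  have hmR : m - 2 ^ j ≤ 2 ^ j := by rw [pow_succ] at hm; omega
  have hLl := h₁ (L.filter (· ∉ R)) _
    (hds.sublist (filter_sublist.trans (sublist_append_left L R))) (hL.filter _) le_rfl
  have hRl := h₁ (R.filter (· ∉ L)) _
    (hds.sublist (filter_sublist.trans (sublist_append_right L R))) (hR.filter _) hmR
  have hLg := h₂ _ _ hds.filter_mem_left (hL.filter _) le_rfl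
  have hRg := h₂ _ _ hds.filter_mem_right (hR.filter _) hmR
  rw [card_toFinset_filter_mem_comm] at hRg
  rw [length_append_eq_filter, card_toFinset_append_eq]
  have hblocks : 2 ^ j - 1 + (m - 2 ^ j - 1) ≤ m - 1 := by omega
  nlinarith [Nat.mul_le_mul_left b hblocks, Nat.mul_le_mul_left d hblocks,
    Nat.mul_le_mul_right (L.filter (· ∈ R)).toFinset.card hca]

theorem pow_succ_add_pow_le_succ_pow (j t : ℕ) : j ^ (t + 1) + j ^ t ≤ (j + 1) ^ (t + 1) :=
  calc j ^ (t + 1) + j ^ t = j ^ t * (j + 1) := by ring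
    _ ≤ (j + 1) ^ t * (j + 1) := by gcongr; omega
    _ = (j + 1) ^ (t + 1) := by ring

theorem blockedLengthBound (t j : ℕ) : BlockedLengthBound (t + 2) j (2 ^ (t + 1)) (j ^ t) := by
  induction t generalizing j with
  | zero => simpa using blockedLengthBound_two j
  | succ t iht =>
    induction j with
    | zero => exact (blockedLengthBound_zero _).mono Nat.one_le_two_pow (by simp)
    | succ j ihj =>
      exact (ihj.succ (iht j) (by rw [pow_succ 2 (t + 1)]; omega)).mono le_rfl
        (pow_succ_add_pow_le_succ_pow j t)

theorem stmt10_general (s j' n m : ℕ) (hs : 2 ≤ s) (hm2 : m ≤ 2 ^ j') :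
    lamB s n m ≤ 2 ^ (s - 1) * n + j' ^ (s - 2) * (m - 1) := by
  obtain ⟨t, rfl⟩ : ∃ t, s = t + 2 := ⟨s - 2, by omega⟩
  refine csSup_le' ?_
  rintro _ ⟨S, hds, hcard, hbl, rfl⟩
  calc S.length ≤ 2 ^ (t + 1) * S.toFinset.card + j' ^ t * (m - 1) :=
        blockedLengthBound t j' S m hds hbl hm2
    _ ≤ 2 ^ (t + 1) * n + j' ^ t * (m - 1) := by gcongr

/-- For all `s ≥ 2`, `j' ≥ 1`, `n ≥ 1` and `1 ≤ m ≤ 2^{j'}`: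
`λ_s(n,m) ≤ 2^{s−1}·n + j'^{s−2}·(m−1)`. -/
theorem stmt10 (s j' n m : ℕ) (hs : 2 ≤ s) (hj : 1 ≤ j')
    (hm1 : 1 ≤ m) (hm2 : m ≤ 2 ^ j') (hn : 1 ≤ n) :
    lamB s n m ≤ 2 ^ (s - 1) * n + j' ^ (s - 2) * (m - 1) :=
  stmt10_general s j' n m hs hm2
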